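/- arXiv:1101.0714 — 4 statements merged into one kernel-verified Lean document; each statement's English description precedes it below -/
import Mathlib

section
/- If Y is a locally path connected topological space and f : Y → X is a continuous map to a topological space X, then the map f' : Y → PX defined by the same underlying function is continuous, where PX is the universal Peano space of X. Moreover f' is the unique continuous lift of f through the Peano map p : PX → X. -/
/-- The universal Peano space topology on `X`: generated by all path components of
all open subsets of `X`. -/
def peanoTopology (X : Type*) [TopologicalSpace X] : TopologicalSpace X :=
  TopologicalSpace.generateFrom
    {s | ∃ (U : Set X) (x : X), IsOpen U ∧ x ∈ U ∧ s = pathComponentIn U x}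

/-!
A generating open set of `PX` is a path component `C` of an open `U ⊆ X`. Near a point `y` of
`f ⁻¹' C`, local path connectedness of `Y` makes the path component of `y` in `f ⁻¹' U` a
neighbourhood of `y`; `f` maps it into the path component of `f y` in `U`, which is `C`.
Uniqueness of the lift is immediate, since `p` is the identity.
-/

open Set Topology

section

variable {Y X : Type*} [TopologicalSpace Y] [TopologicalSpace X] {f : Y → X}

theorem Continuous.mapsTo_pathComponentIn_preimage (hf : Continuous f) (U : Set X) (y : Y) :
    MapsTo f (pathComponentIn (f ⁻¹' U) y) (pathComponentIn U (f y)) :=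
  fun _ hz ↦ (hz.map hf).mono (image_preimage_subset f U)

theorem Continuous.preimage_pathComponentIn_mem_nhds [LocallyPathConnectedSpace Y]
    (hf : Continuous f) {U : Set X} {y : Y} (hU : U ∈ 𝓝 (f y)) :
    f ⁻¹' pathComponentIn U (f y) ∈ 𝓝 y :=
  Filter.mem_of_superset (pathComponentIn_mem_nhds (hf.continuousAt.preimage_mem_nhds hU))
    (hf.mapsTo_pathComponentIn_preimage U y)

theorem Continuous.continuous_peanoTopology [LocallyPathConnectedSpace Y] (hf : Continuous f) :
    @Continuous Y X _ (peanoTopology X) f := by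
  rw [peanoTopology, continuous_generateFrom_iff]
  rintro _ ⟨U, x, hU, -, rfl⟩
  refine isOpen_iff_mem_nhds.mpr fun y hy ↦ ?_
  rw [← pathComponentIn_congr hy]
  exact hf.preimage_pathComponentIn_mem_nhds (hU.mem_nhds (pathComponentIn_subset hy))

end

/-- If `Y` is locally path connected and `f : Y → X` is continuous, then the same
underlying function is continuous as a map `Y → PX`, and it is the unique continuous
lift of `f` through the Peano map (which is the identity function). -/
theorem continuous_lift_to_peano {Y X : Type*} [tY : TopologicalSpace Y]
    [tX : TopologicalSpace X] [LocallyPathConnectedSpace Y]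
    (f : Y → X) (hf : Continuous f) :
    @Continuous Y X tY (peanoTopology X) f ∧
      ∀ g : Y → X, @Continuous Y X tY (peanoTopology X) g → (∀ y, g y = f y) → g = f :=
  ⟨hf.continuous_peanoTopology, fun _ _ hg ↦ funext hg⟩
end

section
/- For a path connected space X and a locally path connected space Y, the natural map induced by the Peano map gives a bijection between the set of homotopy classes of continuous maps [Y, PX] and [Y, X]. -/
/-- The universal Peano space `PX`: same underlying set, Peano topology. -/
def Peano (X : Type*) := X

instance (X : Type*) [TopologicalSpace X] : TopologicalSpace (Peano X) := peanoTopology X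

/-- The universal Peano map, as a function (it is the identity). -/
def peanoMap (X : Type*) [TopologicalSpace X] : Peano X → X := id

/-- The setoid of free homotopy of continuous maps. -/
def htpySetoid (Y X : Type*) [TopologicalSpace Y] [TopologicalSpace X] : Setoid C(Y, X) :=
  ⟨ContinuousMap.Homotopic, ContinuousMap.Homotopic.equivalence⟩

/-- Free homotopy classes of maps `Y → X`. -/
def HtpyClasses (Y X : Type*) [TopologicalSpace Y] [TopologicalSpace X] :=
  Quotient (htpySetoid Y X)

/-- The homotopy class of a continuous map. -/
def hcls {Y X : Type*} [TopologicalSpace Y] [TopologicalSpace X] (f : C(Y, X)) :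
    HtpyClasses Y X := Quotient.mk (htpySetoid Y X) f

/-! The Peano map `PX → X` is a continuous bijection, and a map from a locally path connected
space into `X` stays continuous into `PX`: the path component of `f ⁻¹' U` at `y` is open and is
mapped into the path component of `U` at `f y`. Since `[0,1] × Y` is again locally path
connected, homotopies lift as well, so composing with the Peano map is a bijection on maps that
preserves and reflects homotopy. -/

open Set Topology unitInterval

instance : LocallyPathConnectedSpace I :=
  (convex_Icc (0 : ℝ) 1).locallyPathConnectedSpace

theorem Continuous.mapsTo_pathComponentIn {X Y : Type*} [TopologicalSpace X] [TopologicalSpace Y]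
    {f : X → Y} (hf : Continuous f) {F : Set X} {G : Set Y} (hFG : MapsTo f F G) (x : X) :
    MapsTo f (pathComponentIn F x) (pathComponentIn G (f x)) :=
  fun _ h ↦ (h.map hf).mono hFG.image_subset

theorem peanoTopology_le {X : Type*} [TopologicalSpace X] :
    peanoTopology X ≤ ‹TopologicalSpace X› := fun U hU ↦
  (@isOpen_iff_forall_mem_open X (peanoTopology X) U).2 fun x hx ↦
    ⟨pathComponentIn U x, pathComponentIn_subset,
      TopologicalSpace.isOpen_generateFrom_of_mem ⟨U, x, hU, hx, rfl⟩,
      mem_pathComponentIn_self hx⟩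

namespace Peano

variable {X Y : Type*} [TopologicalSpace X] [TopologicalSpace Y]

def map : C(Peano X, X) := ⟨peanoMap X, continuous_id_of_le peanoTopology_le⟩

variable [LocallyPathConnectedSpace Y]

theorem continuous_of_continuous_peanoMap_comp {f : Y → Peano X}
    (hf : Continuous (peanoMap X ∘ f)) : Continuous f := by
  change Continuous[_, peanoTopology X] f
  refine continuous_generateFrom_iff.2 ?_
  rintro _ ⟨U, x, hU, -, rfl⟩
  refine isOpen_iff_forall_mem_open.2 fun y hy ↦ ⟨pathComponentIn (f ⁻¹' U) y, ?_,
    (hU.preimage hf).pathComponentIn y,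
    mem_pathComponentIn_self (pathComponentIn_subset (F := U) hy)⟩
  rw [← pathComponentIn_congr hy]
  exact hf.mapsTo_pathComponentIn (mapsTo_preimage _ U) y

def lift (g : C(Y, X)) : C(Y, Peano X) where
  toFun := g
  continuous_toFun := continuous_of_continuous_peanoMap_comp g.continuous

def compMapEquiv : C(Y, Peano X) ≃ C(Y, X) where
  toFun := map.comp
  invFun := lift
  left_inv _ := rfl
  right_inv _ := rfl

def liftHomotopy {f g : C(Y, Peano X)} (F : (map.comp f).Homotopy (map.comp g)) :
    f.Homotopy g where
  toContinuousMap := lift F.toContinuousMap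
  map_zero_left := F.map_zero_left
  map_one_left := F.map_one_left

theorem homotopic_iff_homotopic_comp_map {f g : C(Y, Peano X)} :
    f.Homotopic g ↔ (map.comp f).Homotopic (map.comp g) :=
  ⟨(ContinuousMap.Homotopic.refl map).comp, fun ⟨F⟩ ↦ ⟨liftHomotopy F⟩⟩

end Peano

theorem peano_homotopyClasses_bijection_general {X Y : Type*} [TopologicalSpace X]
    [TopologicalSpace Y] [LocallyPathConnectedSpace Y] :
    ∃ e : HtpyClasses Y (Peano X) ≃ HtpyClasses Y X,
      ∀ (f : C(Y, Peano X)) (g : C(Y, X)),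
        (∀ y, g y = peanoMap X (f y)) → e (hcls f) = hcls g := by
  refine ⟨Quotient.congr Peano.compMapEquiv fun _ _ ↦ Peano.homotopic_iff_homotopic_comp_map,
    fun f g hg ↦ ?_⟩
  have hfg : Peano.compMapEquiv f = g := ContinuousMap.ext fun y ↦ (hg y).symm
  exact (Quotient.congr_mk _ _ f).trans (congrArg hcls hfg)

/-- For `X` path connected and `Y` locally path connected, composition with the Peano
map induces a bijection `[Y, PX] ≃ [Y, X]`. -/
theorem peano_homotopyClasses_bijection {X Y : Type*} [TopologicalSpace X]
    [TopologicalSpace Y] [PathConnectedSpace X] [LocallyPathConnectedSpace Y] :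
    ∃ e : HtpyClasses Y (Peano X) ≃ HtpyClasses Y X,
      ∀ (f : C(Y, Peano X)) (g : C(Y, X)),
        (∀ y, g y = peanoMap X (f y)) → e (hcls f) = hcls g :=
  peano_homotopyClasses_bijection_general
end

section
/- Let X be a path connected, locally path connected metric space. If X is not homotopically path Hausdorff, then there exist two paths w, v : [0,1] → X with the same endpoints, not homotopic rel {0,1}, such that v is close to w rel {0,1}: for every ε > 0 there is a path v_ε homotopic to v rel {0,1} with d(w(t), v_ε(t)) < ε for all t ∈ [0,1]. -/
/-- `X` is homotopically path Hausdorff: for every path `w` from `P` to `Q` and every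
non-trivial `α ∈ π₁(X, P)` there are finitely many open sets `U₁,…,U_k` covering `w`
together with a partition `0 = t₀ < … < t_k = 1` with `w([t_{j-1},t_j]) ⊆ U_j` and
marked points `P_j ∈ w([t_{j-1},t_j])`, such that for every return path `v` from `Q`
to `P` compatible with the reversed cover, the concatenation `w * v` does not
represent `α`. -/
def HomotopicallyPathHausdorff (X : Type*) [TopologicalSpace X] : Prop :=
  ∀ (P Q : X) (w : Path P Q) (α : Path P P), ¬α.Homotopic (Path.refl P) →
    ∃ (k : ℕ) (_ : 0 < k) (U : Fin k → Set X) (Pt : Fin k → X)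
      (t : Fin (k + 1) → unitInterval),
        t 0 = 0 ∧ t (Fin.last k) = 1 ∧ StrictMono t ∧
        (∀ j : Fin k, IsOpen (U j) ∧
          ⇑w '' Set.Icc (t j.castSucc) (t j.succ) ⊆ U j ∧
          Pt j ∈ ⇑w '' Set.Icc (t j.castSucc) (t j.succ)) ∧
        ∀ v : Path Q P,
          (∀ j : Fin k, ⇑v '' Set.Icc (t j.castSucc) (t j.succ) ⊆ U j.rev ∧
            Pt j.rev ∈ ⇑v '' Set.Icc (t j.castSucc) (t j.succ)) →
          ¬(w.trans v).Homotopic α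

/-- `v` is close to `w` rel the endpoints `{0,1}`: not homotopic rel endpoints, but for
every `ε > 0` some path homotopic (rel endpoints) to `v` is uniformly `ε`-close to `w`. -/
def PathClose {X : Type*} [MetricSpace X] {P Q : X} (v w : Path P Q) : Prop :=
  ¬v.Homotopic w ∧
    ∀ ε > (0 : ℝ), ∃ v' : Path P Q, v'.Homotopic v ∧
      ∀ s : unitInterval, dist (w s) (v' s) < ε

/-!
Negating the property yields a path `w` and a nontrivial loop `α` such that every open cover
of `w` along a partition admits a return path `v` following the reversed cover with
`w * v ≃ α`. Covering `w` by `ε/2`-balls around the points of a fine uniform partition, the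
reversed path `v⁻¹` is `ε`-close to `w` and homotopic to `α⁻¹ * w`, which is not homotopic to
`w` because `α` is nontrivial.
-/

open Set unitInterval

namespace Path.Homotopic

variable {X : Type*} [TopologicalSpace X] {P Q : X}

theorem symm_homotopic_of_trans_homotopic {w : Path P Q} {v : Path Q P} {α : Path P P}
    (h : (w.trans v).Homotopic α) : v.symm.Homotopic (α.symm.trans w) := by
  rw [← Quotient.eq] at h ⊢
  rw [Quotient.mk_trans, Quotient.mk_symm α, ← h, ← Quotient.mk_symm, Path.trans_symm]
  simp [Quotient.mk_trans, Quotient.mk_symm]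

theorem homotopic_refl_of_symm_trans_homotopic {w : Path P Q} {α : Path P P}
    (h : (α.symm.trans w).Homotopic w) : α.Homotopic (Path.refl P) := by
  rw [← Quotient.eq, Quotient.mk_trans, Quotient.mk_symm] at h
  have hsymm : Quotient.mk α.symm = Quotient.mk (Path.refl P) := by
    simpa [Quotient.mk_symm, Quotient.mk_refl] using
      congrArg (fun γ => γ.trans (Quotient.mk w).symm) h
  simpa using (Quotient.eq.mp hsymm).symm₂

end Path.Homotopic

noncomputable def uniformPartition (k : ℕ) (i : Fin (k + 1)) : I :=
  ⟨(i : ℝ) / k, div_nonneg (Nat.cast_nonneg _) (Nat.cast_nonneg _),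
    div_le_one_of_le₀ (by exact_mod_cast i.is_le) (Nat.cast_nonneg _)⟩

section UniformPartition

variable {k : ℕ}

@[simp]
theorem coe_uniformPartition (i : Fin (k + 1)) : (uniformPartition k i : ℝ) = i / k := rfl

theorem uniformPartition_zero : uniformPartition k 0 = 0 := by
  ext; simp

theorem uniformPartition_last (hk : k ≠ 0) : uniformPartition k (Fin.last k) = 1 := by
  ext; simp [hk]

theorem strictMono_uniformPartition (hk : 0 < k) : StrictMono (uniformPartition k) := by
  intro i j hij
  rw [← Subtype.coe_lt_coe, coe_uniformPartition, coe_uniformPartition]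
  exact div_lt_div_of_pos_right (by exact_mod_cast hij) (by exact_mod_cast hk)

theorem uniformPartition_rev (hk : k ≠ 0) (i : Fin (k + 1)) :
    uniformPartition k i.rev = σ (uniformPartition k i) := by
  ext
  rw [coe_symm_eq, coe_uniformPartition, coe_uniformPartition, Fin.val_rev,
    Nat.cast_sub (by omega)]
  field_simp
  push_cast
  ring

theorem exists_mem_Icc_uniformPartition (hk : 0 < k) (s : I) :
    ∃ j : Fin k, s ∈ Icc (uniformPartition k j.castSucc) (uniformPartition k j.succ) := by
  have hk' : (0 : ℝ) < k := by exact_mod_cast hk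
  obtain h | h := lt_or_ge ⌊(s : ℝ) * k⌋₊ k
  · refine ⟨⟨_, h⟩, ?_, ?_⟩ <;> rw [← Subtype.coe_le_coe]
    · simpa [div_le_iff₀ hk'] using Nat.floor_le (mul_nonneg s.2.1 hk'.le)
    · simpa [le_div_iff₀ hk'] using (Nat.lt_floor_add_one ((s : ℝ) * k)).le
  · obtain ⟨m, rfl⟩ := Nat.exists_eq_add_one_of_ne_zero hk.ne'
    have hs : s = 1 := by
      have : ((m + 1 : ℕ) : ℝ) ≤ s * (m + 1 : ℕ) :=
        (Nat.cast_le.2 h).trans (Nat.floor_le (mul_nonneg s.2.1 hk'.le))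
      exact le_antisymm s.2.2 (by rw [← Subtype.coe_le_coe, Icc.coe_one]; nlinarith)
    refine ⟨Fin.last m, ?_, ?_⟩
    · rw [hs]; exact le_one _
    · rw [hs, Fin.succ_last, uniformPartition_last hk.ne']

theorem dist_uniformPartition_castSucc_le {j : Fin k} {s : I}
    (hs : s ∈ Icc (uniformPartition k j.castSucc) (uniformPartition k j.succ)) :
    dist s (uniformPartition k j.castSucc) ≤ 1 / k := by
  obtain ⟨h₀, h₁⟩ := hs
  rw [← Subtype.coe_le_coe, coe_uniformPartition] at h₀ h₁
  rw [Subtype.dist_eq, Real.dist_eq, coe_uniformPartition, abs_of_nonneg (sub_nonneg.2 h₀)]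
  simp only [Fin.val_succ, Fin.val_castSucc, Nat.cast_add, Nat.cast_one] at h₁ ⊢
  calc (s : ℝ) - j / k ≤ (j + 1) / k - j / k := by linarith
    _ = 1 / k := by ring

theorem symm_mem_Icc_uniformPartition_rev (hk : k ≠ 0) {j : Fin k} {s : I}
    (hs : s ∈ Icc (uniformPartition k j.castSucc) (uniformPartition k j.succ)) :
    σ s ∈ Icc (uniformPartition k j.rev.castSucc) (uniformPartition k j.rev.succ) := by
  rw [← Fin.rev_succ, ← Fin.rev_castSucc, uniformPartition_rev hk, uniformPartition_rev hk]
  exact ⟨symm_le_symm.2 hs.2, symm_le_symm.2 hs.1⟩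

end UniformPartition

theorem Continuous.exists_uniformPartition_image_subset_ball {X : Type*} [PseudoMetricSpace X]
    {f : I → X} (hf : Continuous f) {ε : ℝ} (hε : 0 < ε) :
    ∃ k, 0 < k ∧ ∀ j : Fin k, f '' Icc (uniformPartition k j.castSucc) (uniformPartition k j.succ)
      ⊆ Metric.ball (f (uniformPartition k j.castSucc)) ε := by
  obtain ⟨δ, hδ, hfδ⟩ :=
    Metric.uniformContinuous_iff.1 (CompactSpace.uniformContinuous_of_continuous hf) ε hε
  obtain ⟨n, hn⟩ := exists_nat_one_div_lt hδ
  refine ⟨n + 1, n.succ_pos, fun j => ?_⟩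
  rintro _ ⟨s, hs, rfl⟩
  exact hfδ ((dist_uniformPartition_castSucc_le hs).trans_lt (by exact_mod_cast hn))

theorem not_hph_implies_close_paths_general {X : Type*} [MetricSpace X]
    (h : ¬HomotopicallyPathHausdorff X) :
    ∃ (P Q : X) (w v : Path P Q), PathClose v w := by
  simp only [HomotopicallyPathHausdorff, not_forall, not_exists, not_and, not_not] at h
  obtain ⟨P, Q, w, α, hα, hreturn⟩ := h
  refine ⟨P, Q, w, α.symm.trans w,
    fun hw => hα (Path.Homotopic.homotopic_refl_of_symm_trans_homotopic hw), fun ε hε => ?_⟩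
  obtain ⟨k, hk, hball⟩ := w.continuous.exists_uniformPartition_image_subset_ball (half_pos hε)
  have ht := strictMono_uniformPartition hk
  obtain ⟨v, hv, hwv⟩ := hreturn k hk
    (fun j => Metric.ball (w (uniformPartition k j.castSucc)) (ε / 2))
    (fun j => w (uniformPartition k j.castSucc)) (uniformPartition k) uniformPartition_zero
    (uniformPartition_last hk.ne') ht fun j => ⟨Metric.isOpen_ball, hball j,
      mem_image_of_mem w (left_mem_Icc.2 (ht j.castSucc_lt_succ).le)⟩
  refine ⟨v.symm, Path.Homotopic.symm_homotopic_of_trans_homotopic hwv, fun s => ?_⟩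
  obtain ⟨j, hs⟩ := exists_mem_Icc_uniformPartition hk s
  have hw : w s ∈ Metric.ball (w (uniformPartition k j.castSucc)) (ε / 2) :=
    hball j (mem_image_of_mem w hs)
  have hvs : v (σ s) ∈ Metric.ball (w (uniformPartition k j.castSucc)) (ε / 2) := by
    simpa using (hv j.rev).1 (mem_image_of_mem v (symm_mem_Icc_uniformPartition_rev hk.ne' hs))
  calc dist (w s) (v (σ s)) < ε / 2 + ε / 2 :=
      (dist_triangle_right _ _ _).trans_lt (add_lt_add hw hvs)
    _ = ε := add_halves ε

/-- In a path connected, locally path connected metric space which is not homotopically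
path Hausdorff, there exist two non-homotopic (rel endpoints) paths with the same
endpoints, one close to the other rel `{0,1}`. -/
theorem not_hph_implies_close_paths {X : Type*} [MetricSpace X] [PathConnectedSpace X]
    [LocallyPathConnectedSpace X] (h : ¬HomotopicallyPathHausdorff X) :
    ∃ (P Q : X) (w v : Path P Q), PathClose v w :=
  not_hph_implies_close_paths_general h
end

section
/- Let (X, x₀) be a pointed space. If α : (S¹, *) → (X, x₀) is a small loop (every neighborhood of x₀ contains a pointed-homotopic representative of α), then for every open cover 𝒰 of X, the class [α] lies in the Spanier group π₁(𝒰, x₀). Consequently the subgroup π₁ˢ(X, x₀) generated by small loops is contained in the Spanier group π₁ˢᵖ(X, x₀) = ⋂_𝒰 π₁(𝒰, x₀). -/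
universe u

/-- The element of the fundamental group determined by a loop. -/
noncomputable def pathClass {X : Type u} [TopologicalSpace X] {x : X} (α : Path x x) :
    FundamentalGroup X x :=
  @FundamentalGroup.fromPath X _ x ⟦α⟧

/-- The Spanier group of `(X, x₀)` with respect to a cover `𝒰`: the subgroup of
`π₁(X, x₀)` generated by classes of loops `u * v * u⁻¹` where `u` is a path from `x₀`
to a point `y` and `v` is a loop at `y` contained in some member of `𝒰`. -/
noncomputable def spanierGroup {X : Type u} [TopologicalSpace X] (𝒰 : Set (Set X)) (x₀ : X) :
    Subgroup (FundamentalGroup X x₀) :=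
  Subgroup.closure {g | ∃ U ∈ 𝒰, ∃ (y : X) (u : Path x₀ y) (v : Path y y),
    Set.range v ⊆ U ∧ g = pathClass ((u.trans v).trans u.symm)}

/-- `𝒰` is an open cover of `X`. -/
def IsOpenCover {X : Type u} [TopologicalSpace X] (𝒰 : Set (Set X)) : Prop :=
  (∀ U ∈ 𝒰, IsOpen U) ∧ ⋃₀ 𝒰 = Set.univ

/-- A loop `α` at `x₀` is small if every open neighborhood of `x₀` contains a loop
based at `x₀` homotopic rel basepoint to `α`. -/
def IsSmallLoop {X : Type u} [TopologicalSpace X] {x₀ : X} (α : Path x₀ x₀) : Prop :=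
  ∀ U : Set X, IsOpen U → x₀ ∈ U →
    ∃ β : Path x₀ x₀, Set.range β ⊆ U ∧ β.Homotopic α

section

variable {X : Type u} [TopologicalSpace X]

lemma pathClass_eq_of_homotopic {x : X} {α β : Path x x} (h : α.Homotopic β) :
    pathClass α = pathClass β :=
  congrArg FundamentalGroup.fromPath (Quotient.sound h)

lemma pathClass_mem_spanierGroup_of_range_subset {x₀ : X} {𝒰 : Set (Set X)} {U : Set X}
    (hU : U ∈ 𝒰) {v : Path x₀ x₀} (hv : Set.range v ⊆ U) :
    pathClass v ∈ spanierGroup 𝒰 x₀ := by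
  refine Subgroup.subset_closure ⟨U, hU, x₀, Path.refl x₀, v, hv, pathClass_eq_of_homotopic ?_⟩
  rw [Path.refl_symm]
  exact ((Path.Homotopic.trans_refl _).trans (Path.Homotopic.refl_trans v)).symm

lemma IsSmallLoop.pathClass_mem_spanierGroup {x₀ : X} {α : Path x₀ x₀}
    (hα : IsSmallLoop α) {𝒰 : Set (Set X)} (h𝒰 : IsOpenCover 𝒰) :
    pathClass α ∈ spanierGroup 𝒰 x₀ := by
  obtain ⟨U, hU𝒰, hx₀U⟩ := Set.mem_sUnion.mp (h𝒰.2 ▸ Set.mem_univ x₀)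
  obtain ⟨β, hβU, hβα⟩ := hα U (h𝒰.1 U hU𝒰) hx₀U
  rw [← pathClass_eq_of_homotopic hβα]
  exact pathClass_mem_spanierGroup_of_range_subset hU𝒰 hβU

end

/-- The class of a small loop lies in the Spanier group with respect to every open
cover; consequently, the subgroup generated by small loops is contained in the
Spanier group of `X` (the intersection over all open covers). -/
theorem small_loops_in_spanierGroup {X : Type u} [TopologicalSpace X] (x₀ : X) :
    (∀ α : Path x₀ x₀, IsSmallLoop α →
      ∀ 𝒰 : Set (Set X), IsOpenCover 𝒰 → pathClass α ∈ spanierGroup 𝒰 x₀) ∧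
    ∀ 𝒰 : Set (Set X), IsOpenCover 𝒰 →
      Subgroup.closure {g | ∃ α : Path x₀ x₀, IsSmallLoop α ∧ g = pathClass α} ≤
        spanierGroup 𝒰 x₀ := by
  refine ⟨fun α hα 𝒰 h𝒰 => hα.pathClass_mem_spanierGroup h𝒰, fun 𝒰 h𝒰 => ?_⟩
  rw [Subgroup.closure_le]
  rintro g ⟨α, hα, rfl⟩
  exact hα.pathClass_mem_spanierGroup h𝒰
end
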